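/- Causal non-interpretability of the random-effects log-risk-ratio estimand (Appendix B.1). Let p₁, p₂ ∈ (0,1). For p ∈ [0,1] and a function μ : {0,1} × {0,1} → (0,1], define R_p(μ) := (p·μ(1,1) + (1−p)·μ(1,0)) / (p·μ(0,1) + (1−p)·μ(0,0)). Then there exists p* ∈ [0,1] such that for every function μ : {0,1} × {0,1} → (0,1] one has (1/2)·log R_{p₁}(μ) + (1/2)·log R_{p₂}(μ) = log R_{p*}(μ), if and only if p₁ = p₂; and in that case necessarily p* = p₁ = p₂. -/
import Mathlib


/-!
Statement 7: Causal non-interpretability of the random-effects log-risk-ratio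
estimand (Appendix B.1).
-/

namespace CausalMeta

/-- The risk ratio `R_p(μ)` of the population with covariate proportion `p` on a binary
covariate, for the outcome function `μ a x` (mean outcome under arm `a` at covariate
value `x`): `R_p(μ) = (p μ(1,1) + (1−p) μ(1,0)) / (p μ(0,1) + (1−p) μ(0,0))`. -/
noncomputable def riskRatio (p : ℝ) (μ : Fin 2 → Fin 2 → ℝ) : ℝ :=
  (p * μ 1 1 + (1 - p) * μ 1 0) / (p * μ 0 1 + (1 - p) * μ 0 0)

/-- Test outcome function: `μ(1,1) = t` and `1` elsewhere. -/
def testμ (t : ℝ) : Fin 2 → Fin 2 → ℝ := fun a x => if a = 1 ∧ x = 1 then t else 1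

lemma testμ_mem {t : ℝ} (ht : t ∈ Set.Ioc (0:ℝ) 1) :
    ∀ a x, testμ t a x ∈ Set.Ioc (0:ℝ) 1 := by
  intro a x
  unfold testμ
  split
  · exact ht
  · exact ⟨one_pos, le_refl 1⟩

lemma riskRatio_testμ (p t : ℝ) : riskRatio p (testμ t) = p * t + (1 - p) := by
  unfold riskRatio testμ
  norm_num

lemma log_eq_to_prod {A B C : ℝ} (hA : 0 < A) (hB : 0 < B) (hC : 0 < C)
    (h : (1/2) * Real.log A + (1/2) * Real.log B = Real.log C) :
    A * B = C ^ 2 := by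
  have h2 : Real.log (A * B) = Real.log (C ^ 2) := by
    rw [Real.log_mul hA.ne' hB.ne', Real.log_pow]
    push_cast
    linarith
  have := congrArg Real.exp h2
  rwa [Real.exp_log (by positivity), Real.exp_log (by positivity)] at this

lemma key (p₁ p₂ ps : ℝ) (hp₁ : p₁ ∈ Set.Ioo (0 : ℝ) 1) (hp₂ : p₂ ∈ Set.Ioo (0 : ℝ) 1)
    (hps : ps ∈ Set.Icc (0 : ℝ) 1)
    (h : ∀ μ : Fin 2 → Fin 2 → ℝ, (∀ a x, μ a x ∈ Set.Ioc (0 : ℝ) 1) →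
        (1 / 2) * Real.log (riskRatio p₁ μ) + (1 / 2) * Real.log (riskRatio p₂ μ)
          = Real.log (riskRatio ps μ)) :
    ps = p₁ ∧ ps = p₂ := by
  obtain ⟨hp₁0, hp₁1⟩ := hp₁
  obtain ⟨hp₂0, hp₂1⟩ := hp₂
  obtain ⟨hps0, hps1⟩ := hps
  have main : ∀ t ∈ Set.Ioc (0:ℝ) 1,
      (p₁ * t + (1 - p₁)) * (p₂ * t + (1 - p₂)) = (ps * t + (1 - ps)) ^ 2 := by
    intro t ht
    obtain ⟨ht0, ht1⟩ := ht
    have h1 := h (testμ t) (testμ_mem ⟨ht0, ht1⟩)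
    rw [riskRatio_testμ, riskRatio_testμ, riskRatio_testμ] at h1
    have hA : 0 < p₁ * t + (1 - p₁) := by nlinarith
    have hB : 0 < p₂ * t + (1 - p₂) := by nlinarith
    have hC : 0 < ps * t + (1 - ps) := by
      nlinarith [mul_nonneg (by linarith : (0:ℝ) ≤ 1 - ps) (by linarith : (0:ℝ) ≤ 1 - t)]
    exact log_eq_to_prod hA hB hC h1
  have e1 := main (1/2) (by norm_num)
  have e2 := main (1/4) (by norm_num)
  ring_nf at e1 e2
  have hps' : ps = (p₁ + p₂) / 2 := by nlinarith [e1, e2]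
  have hP : p₁ * p₂ = ps ^ 2 := by nlinarith [e1, e2]
  have hz : (p₁ - p₂) ^ 2 = 0 := by nlinarith [hP, hps']
  have h12 : p₁ = p₂ := by nlinarith [hz]
  constructor <;> nlinarith [hps', h12]

/-- **Non-interpretability of the random-effects log-risk-ratio estimand.**
There is a target proportion `p* ∈ [0,1]`, independent of the outcome function `μ`,
with `(1/2) log R_{p₁}(μ) + (1/2) log R_{p₂}(μ) = log R_{p*}(μ)` for all
`μ : {0,1} × {0,1} → (0,1]`, if and only if `p₁ = p₂`; and any such `p*` necessarily
equals `p₁ = p₂`. -/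
theorem randomEffects_logRR_not_causally_interpretable
    (p₁ p₂ : ℝ) (hp₁ : p₁ ∈ Set.Ioo (0 : ℝ) 1) (hp₂ : p₂ ∈ Set.Ioo (0 : ℝ) 1) :
    ((∃ ps ∈ Set.Icc (0 : ℝ) 1,
        ∀ μ : Fin 2 → Fin 2 → ℝ, (∀ a x, μ a x ∈ Set.Ioc (0 : ℝ) 1) →
          (1 / 2) * Real.log (riskRatio p₁ μ) + (1 / 2) * Real.log (riskRatio p₂ μ)
            = Real.log (riskRatio ps μ))
      ↔ p₁ = p₂)
    ∧ ∀ ps ∈ Set.Icc (0 : ℝ) 1,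
        (∀ μ : Fin 2 → Fin 2 → ℝ, (∀ a x, μ a x ∈ Set.Ioc (0 : ℝ) 1) →
          (1 / 2) * Real.log (riskRatio p₁ μ) + (1 / 2) * Real.log (riskRatio p₂ μ)
            = Real.log (riskRatio ps μ)) →
        ps = p₁ ∧ ps = p₂ := by
  constructor
  · constructor
    · rintro ⟨ps, hps, h⟩
      obtain ⟨h1, h2⟩ := key p₁ p₂ ps hp₁ hp₂ hps h
      linarith
    · intro h
      subst h
      refine ⟨p₁, ⟨hp₁.1.le, hp₁.2.le⟩, fun μ _ => by ring⟩
  · intro ps hps h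
    exact key p₁ p₂ ps hp₁ hp₂ hps h

end CausalMeta
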